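/- Let k ≥ 1 be a real number and let H : ℂ → ℝ be twice continuously differentiable with ΔH = 0 on all of ℂ (H is harmonic). If the function z ↦ |z|^{4k}·(1 + |z|²)^{−2k}·exp(−k·H(z)) is bounded on ℂ, then H is constant. -/

import Mathlib

open Complex

/-- The Laplacian of a function `f : ℂ → ℝ`, identifying `ℂ` with `ℝ²` via `z = x + iy`:
`Δf = ∂²f/∂x² + ∂²f/∂y²`. -/
noncomputable def planeLaplacian (f : ℂ → ℝ) (z : ℂ) : ℝ :=
  fderiv ℝ (fun w => fderiv ℝ f w 1) z 1 +
    fderiv ℝ (fun w => fderiv ℝ f w Complex.I) z Complex.I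

/-!
A harmonic `H` on `ℂ` is the real part of an entire function `F`, so `‖exp (-F)‖ = exp (-H)`.
Away from the unit disc the weight `|z|^{4k} (1 + |z|²)^{-2k}` is at least `2^{-2k}`, so the
hypothesis bounds `exp (-k H)` there, and compactness bounds it on the disc. Hence `H` is bounded
below, `exp (-F)` is a bounded entire function, and Liouville's theorem makes it, and thus `H`,
constant.
-/

open InnerProductSpace Laplacian Set

theorem planeLaplacian_eq_laplacian {f : ℂ → ℝ} {z : ℂ} (hf : ContDiffAt ℝ 2 f z) :
    planeLaplacian f z = Δ f z := by
  have hdiff : DifferentiableAt ℝ (fderiv ℝ f) z :=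
    (hf.fderiv_right (m := 1) (by norm_num)).differentiableAt one_ne_zero
  simp only [laplacian_eq_iteratedFDeriv_complexPlane, iteratedFDeriv_two_apply, planeLaplacian,
    fderiv_clm_apply hdiff (differentiableAt_const _)]
  simp

theorem harmonicOnNhd_univ_of_planeLaplacian_eq_zero {f : ℂ → ℝ} (hf : ContDiff ℝ 2 f)
    (hΔ : ∀ z, planeLaplacian f z = 0) : HarmonicOnNhd f univ := fun z _ =>
  ⟨hf.contDiffAt, Filter.Eventually.of_forall fun w => by
    rw [← planeLaplacian_eq_laplacian hf.contDiffAt, hΔ w, Pi.zero_apply]⟩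

theorem InnerProductSpace.HarmonicOnNhd.apply_eq_apply_of_bddBelow {f : ℂ → ℝ}
    (hf : HarmonicOnNhd f univ) (hb : BddBelow (range f)) (z w : ℂ) : f z = f w := by
  obtain ⟨F, hFa, hFre⟩ := hf.exists_analyticOnNhd_univ_re_eq
  obtain ⟨B, hB⟩ := hb
  have hnorm : ∀ z, ‖exp (-F z)‖ = Real.exp (-f z) := fun z => by
    rw [norm_exp, neg_re, ← hFre]
  have hdiff : Differentiable ℂ fun z => exp (-F z) :=
    differentiable_exp.comp (differentiableOn_univ.1 hFa.differentiableOn).neg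
  have hbdd : Bornology.IsBounded (range fun z => exp (-F z)) := by
    refine isBounded_iff_forall_norm_le.2 ⟨Real.exp (-B), ?_⟩
    rintro _ ⟨z, rfl⟩
    rw [hnorm]
    exact Real.exp_le_exp.2 (neg_le_neg (hB ⟨z, rfl⟩))
  have h := congrArg norm (hdiff.apply_eq_apply_of_bounded hbdd z w)
  simp only [hnorm, Real.exp_eq_exp, neg_inj] at h
  exact h

theorem bddAbove_range_of_mul_le {E : Type*} [NormedAddCommGroup E] [ProperSpace E]
    {f w : E → ℝ} {R c M : ℝ} (hf : Continuous f) (hf0 : ∀ x, 0 ≤ f x) (hc : 0 < c)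
    (hw : ∀ x, R ≤ ‖x‖ → c ≤ w x) (hM : ∀ x, w x * f x ≤ M) : BddAbove (range f) := by
  obtain ⟨B, hB⟩ := (isCompact_closedBall (0 : E) R).bddAbove_image hf.continuousOn
  refine ⟨max B (M / c), ?_⟩
  rintro _ ⟨x, rfl⟩
  rcases le_or_gt ‖x‖ R with hx | hx
  · exact le_max_of_le_left (hB ⟨x, by simpa using hx, rfl⟩)
  · refine le_max_of_le_right ((le_div_iff₀' hc).2 ?_)
    exact (mul_le_mul_of_nonneg_right (hw x hx.le) (hf0 x)).trans (hM x)

theorem two_rpow_neg_le_norm_rpow_mul_one_add_normSq_rpow {k : ℝ} (hk : 0 ≤ k) {z : ℂ}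
    (hz : 1 ≤ ‖z‖) :
    (2 : ℝ) ^ (-(2 * k)) ≤ ‖z‖ ^ (4 * k) * (1 + normSq z) ^ (-(2 * k)) := by
  have hs : 1 ≤ normSq z := by
    rw [normSq_eq_norm_sq]
    nlinarith
  have hweight : ‖z‖ ^ (4 * k) * (1 + normSq z) ^ (-(2 * k))
      = (normSq z / (1 + normSq z)) ^ (2 * k) := by
    rw [show 4 * k = 2 * (2 * k) by ring, Real.rpow_mul (norm_nonneg z), Real.rpow_two,
      ← normSq_eq_norm_sq, Real.rpow_neg (by positivity),
      Real.div_rpow (by positivity) (by positivity), div_eq_mul_inv]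
  rw [hweight, Real.rpow_neg (by norm_num), ← Real.inv_rpow (by norm_num)]
  refine Real.rpow_le_rpow (by norm_num) ?_ (by positivity)
  rw [le_div_iff₀ (by positivity)]
  linarith

theorem stmt_9 (k : ℝ) (hk : 1 ≤ k) (H : ℂ → ℝ)
    (hH : ContDiff ℝ 2 H) (hharm : ∀ z, planeLaplacian H z = 0)
    (hbdd : ∃ M : ℝ, ∀ z : ℂ,
      ‖z‖ ^ (4 * k) * (1 + Complex.normSq z) ^ (-(2 * k)) *
        Real.exp (-k * H z) ≤ M) :
    ∀ z w : ℂ, H z = H w := by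
  have hk0 : 0 < k := zero_lt_one.trans_le hk
  obtain ⟨M, hM⟩ := hbdd
  obtain ⟨B, hB⟩ : BddAbove (range fun z => Real.exp (-k * H z)) :=
    bddAbove_range_of_mul_le (by fun_prop) (fun _ => (Real.exp_pos _).le)
      (by positivity : (0 : ℝ) < 2 ^ (-(2 * k)))
      (fun _ => two_rpow_neg_le_norm_rpow_mul_one_add_normSq_rpow hk0.le) hM
  have hHbdd : BddBelow (range H) := by
    refine ⟨-Real.log B / k, ?_⟩
    rintro _ ⟨z, rfl⟩
    have hexp := hB ⟨z, rfl⟩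
    have hlog : -k * H z ≤ Real.log B :=
      (Real.le_log_iff_exp_le ((Real.exp_pos _).trans_le hexp)).2 hexp
    rw [div_le_iff₀ hk0]
    linarith
  exact (harmonicOnNhd_univ_of_planeLaplacian_eq_zero hH hharm).apply_eq_apply_of_bddBelow hHbdd
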